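/- arXiv:1906.12015 — 3 statements merged into one kernel-verified Lean document; each statement's English description precedes it below -/
import Mathlib

section
/- Let G be a symmetric positive semidefinite matrix, γ ≥ 0, and suppose x_{k+1} minimizes x ↦ Φ(x) + (1/2)‖x − x^{md}_k‖²_G over ℝ^m, where x^{md}_k = x_k + γ(x_k − x_{k−1}). Then Φ(x_k) − Φ(x_{k+1}) ≥ (γ/2)(‖x_{k+1} − x_k‖²_G − ‖x_k − x_{k−1}‖²_G) + ((1−2γ)/2)‖x_{k+1} − x_k‖²_G. -/
/-!
Compare the minimizer `x1` with the competitor `xk`. Writing `a = x1 - xk`, `b = xk - xkm` and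
`q v = vᵀ G v`, the two proximal terms are `q (a - γ b) / 2` and `q (γ b) / 2`, and their
difference equals the claimed lower bound plus `(γ / 2) q (a - b)`, which is nonnegative because
`G` is positive semidefinite and `γ ≥ 0`.
-/

open Matrix

lemma EReal.coe_sub_add_le_of_add_le_add {a b : EReal} {c d : ℝ} (h : a + c ≤ b + d) :
    ((c - d : ℝ) : EReal) + a ≤ b := by
  have h' := add_le_add_left h ((-d : ℝ) : EReal)
  rwa [add_assoc, add_assoc, ← EReal.coe_add, ← EReal.coe_add, add_neg_cancel, EReal.coe_zero,
    add_zero, add_comm, ← sub_eq_add_neg] at h'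

/-- The quadratic form at the convex combination `a - γ b = (1 - γ) a + γ (a - b)`. -/
theorem Matrix.dotProduct_mulVec_sub_smul {n R : Type*} [Fintype n] [CommRing R]
    (G : Matrix n n R) (a b : n → R) (γ : R) :
    (a - γ • b) ⬝ᵥ G *ᵥ (a - γ • b) - (γ • b) ⬝ᵥ G *ᵥ (γ • b) =
      (1 - γ) * (a ⬝ᵥ G *ᵥ a) - γ * (b ⬝ᵥ G *ᵥ b) + γ * ((a - b) ⬝ᵥ G *ᵥ (a - b)) := by
  simp only [mulVec_sub, mulVec_smul, sub_dotProduct, dotProduct_sub, smul_dotProduct,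
    dotProduct_smul, smul_eq_mul]
  ring

theorem stmt_5_general {m : ℕ} (Φ : (Fin m → ℝ) → EReal)
    (G : Matrix (Fin m) (Fin m) ℝ) (hG : G.PosSemidef)
    (γ : ℝ) (hγ0 : 0 ≤ γ)
    (xkm xk x1 xmd : Fin m → ℝ)
    (hmd : xmd = xk + γ • (xk - xkm))
    (hmin : ∀ x : Fin m → ℝ,
      Φ x1 + ((1 / 2) * ((x1 - xmd) ⬝ᵥ G.mulVec (x1 - xmd)) : ℝ) ≤
        Φ x + ((1 / 2) * ((x - xmd) ⬝ᵥ G.mulVec (x - xmd)) : ℝ)) :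
    (((γ / 2) * ((x1 - xk) ⬝ᵥ G.mulVec (x1 - xk) - (xk - xkm) ⬝ᵥ G.mulVec (xk - xkm))
        + ((1 - 2 * γ) / 2) * ((x1 - xk) ⬝ᵥ G.mulVec (x1 - xk)) : ℝ) : EReal)
      + Φ x1 ≤ Φ xk := by
  have hx1 : x1 - xmd = (x1 - xk) - γ • (xk - xkm) := by rw [hmd]; abel
  have hxk : xk - xmd = -(γ • (xk - xkm)) := by rw [hmd]; abel
  set a := x1 - xk
  set b := xk - xkm
  have hcomp := hmin xk
  rw [hx1, hxk, mulVec_neg, dotProduct_neg, neg_dotProduct, neg_neg] at hcomp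
  have hgap := G.dotProduct_mulVec_sub_smul a b γ
  have hab : 0 ≤ (a - b) ⬝ᵥ G *ᵥ (a - b) := by
    simpa using hG.dotProduct_mulVec_nonneg (a - b)
  refine le_trans ?_ (EReal.coe_sub_add_le_of_add_le_add hcomp)
  gcongr
  linarith [mul_nonneg hγ0 hab]

theorem stmt_5 {m : ℕ} (Φ : (Fin m → ℝ) → EReal)
    (G : Matrix (Fin m) (Fin m) ℝ) (hG : G.PosSemidef)
    (γ : ℝ) (hγ0 : 0 ≤ γ) (hγ1 : γ < 1 / 2)
    (xkm xk x1 xmd : Fin m → ℝ)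
    (hmd : xmd = xk + γ • (xk - xkm))
    (hmin : ∀ x : Fin m → ℝ,
      Φ x1 + ((1 / 2) * ((x1 - xmd) ⬝ᵥ G.mulVec (x1 - xmd)) : ℝ) ≤
        Φ x + ((1 / 2) * ((x - xmd) ⬝ᵥ G.mulVec (x - xmd)) : ℝ)) :
    (((γ / 2) * ((x1 - xk) ⬝ᵥ G.mulVec (x1 - xk) - (xk - xkm) ⬝ᵥ G.mulVec (xk - xkm))
        + ((1 - 2 * γ) / 2) * ((x1 - xk) ⬝ᵥ G.mulVec (x1 - xk)) : ℝ) : EReal)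
      + Φ x1 ≤ Φ xk :=
  stmt_5_general Φ G hG γ hγ0 xkm xk x1 xmd hmd hmin
end

section
/- Suppose (τ, α) satisfies 0 < τ + α < 1, σ_B > 0, L_g > 0, and β > L_g/(√(1−τ−α)·σ_B). If vectors Δy ∈ ℝ^n and Δλ ∈ ℝ^l satisfy ‖Δλ‖ ≤ (1/√σ_B)‖BᵀΔλ‖ and ‖BᵀΔλ‖ ≤ L_g‖Δy‖ and ‖BΔy‖² ≥ σ_B‖Δy‖², then (1/(τ+α) − 1)β‖BΔy‖² − (1/((τ+α)β))‖Δλ‖² ≥ ζ₂‖Δy‖², where ζ₂ = ((1−τ−α)β²σ_B² − L_g²)/((τ+α)βσ_B). -/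
open Matrix

theorem stmt_9 {l n : ℕ} (B : Matrix (Fin l) (Fin n) ℝ)
    (τ α β Lg σB : ℝ) (hτα : 0 < τ + α) (hτα1 : τ + α < 1)
    (hσB : 0 < σB) (hLg : 0 < Lg) (hβ : 0 < β)
    (hA2 : β > Lg / (Real.sqrt (1 - τ - α) * σB))
    (Δy : EuclideanSpace ℝ (Fin n)) (Δlam : EuclideanSpace ℝ (Fin l))
    (h1 : ‖Δlam‖ ≤ (1 / Real.sqrt σB) * ‖Matrix.toEuclideanLin Bᵀ Δlam‖)
    (h2 : ‖Matrix.toEuclideanLin Bᵀ Δlam‖ ≤ Lg * ‖Δy‖)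
    (h3 : σB * ‖Δy‖ ^ 2 ≤ ‖Matrix.toEuclideanLin B Δy‖ ^ 2) :
    ((1 - τ - α) * β ^ 2 * σB ^ 2 - Lg ^ 2) / ((τ + α) * β * σB) * ‖Δy‖ ^ 2 ≤
      (1 / (τ + α) - 1) * β * ‖Matrix.toEuclideanLin B Δy‖ ^ 2
        - (1 / ((τ + α) * β)) * ‖Δlam‖ ^ 2 := by
  have hs : (0:ℝ) < Real.sqrt σB := Real.sqrt_pos.mpr hσB
  have h4 : ‖Δlam‖ ≤ (1 / Real.sqrt σB) * (Lg * ‖Δy‖) := by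
    refine h1.trans ?_
    exact mul_le_mul_of_nonneg_left h2 (by positivity)
  have h5 : ‖Δlam‖ ^ 2 ≤ ((1 / Real.sqrt σB) * (Lg * ‖Δy‖)) ^ 2 := by
    exact pow_le_pow_left₀ (norm_nonneg _) h4 2
  have hsq : Real.sqrt σB ^ 2 = σB := Real.sq_sqrt hσB.le
  have h6 : ‖Δlam‖ ^ 2 ≤ Lg ^ 2 / σB * ‖Δy‖ ^ 2 := by
    calc ‖Δlam‖ ^ 2 ≤ ((1 / Real.sqrt σB) * (Lg * ‖Δy‖)) ^ 2 := h5
      _ = Lg ^ 2 / (Real.sqrt σB ^ 2) * ‖Δy‖ ^ 2 := by ring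
      _ = Lg ^ 2 / σB * ‖Δy‖ ^ 2 := by rw [hsq]
  have hcoef : (0:ℝ) < 1 / (τ + α) - 1 := by
    have : 1 < 1 / (τ + α) := by rw [lt_div_iff₀ hτα]; linarith
    linarith
  have hB := mul_le_mul_of_nonneg_left h3 (by positivity : (0:ℝ) ≤ (1 / (τ + α) - 1) * β)
  have hL := mul_le_mul_of_nonneg_left h6 (by positivity : (0:ℝ) ≤ 1 / ((τ + α) * β))
  have key : ((1 - τ - α) * β ^ 2 * σB ^ 2 - Lg ^ 2) / ((τ + α) * β * σB) * ‖Δy‖ ^ 2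
      = (1 / (τ + α) - 1) * β * (σB * ‖Δy‖ ^ 2)
        - 1 / ((τ + α) * β) * (Lg ^ 2 / σB * ‖Δy‖ ^ 2) := by
    field_simp
    ring
  linarith [hB, hL]
end

section
/- Let f, g be functions on ℝ^m, ℝ^n with inf_{x,y} [f(x) + g(y) − (1/(2L_g))‖∇g(y)‖²] = L̲ > −∞, and suppose β, L_g, σ_B > 0 with 1/(2L_g) ≥ 1/(2βσ_B). If a point (x, y, λ) satisfies Bᵀλ = ∇g(y) and ‖λ‖² ≤ (1/σ_B)‖Bᵀλ‖², then the augmented Lagrangian L_β(x,y,λ) = f(x) + g(y) − ⟨λ, Ax+By−b⟩ + (β/2)‖Ax+By−b‖² satisfies L_β(x,y,λ) ≥ L̲ + (1/(2L_g) − 1/(2βσ_B))‖Bᵀλ‖² + (β/2)‖Ax+By−b − λ/β‖². -/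
open Matrix

theorem neg_inner_add_half_mul_norm_sq_eq {E : Type*} [NormedAddCommGroup E]
    [InnerProductSpace ℝ E] {β : ℝ} (hβ : β ≠ 0) (lam r : E) :
    -inner ℝ lam r + β / 2 * ‖r‖ ^ 2 = β / 2 * ‖r - β⁻¹ • lam‖ ^ 2 - ‖lam‖ ^ 2 / (2 * β) := by
  rw [norm_sub_sq_real, real_inner_smul_right, norm_smul, real_inner_comm, mul_pow,
    Real.norm_eq_abs, sq_abs]
  field_simp
  ring

theorem stmt_13_general {l m n : ℕ}
    (f : EuclideanSpace ℝ (Fin m) → ℝ) (g : EuclideanSpace ℝ (Fin n) → ℝ)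
    (g' : EuclideanSpace ℝ (Fin n) → EuclideanSpace ℝ (Fin n))
    (A : Matrix (Fin l) (Fin m) ℝ) (B : Matrix (Fin l) (Fin n) ℝ) (b : EuclideanSpace ℝ (Fin l))
    (β Lg σB Lbar : ℝ) (hβ : 0 < β)
    (hinf : IsGLB {r : ℝ | ∃ x y, r = f x + g y - (1 / (2 * Lg)) * ‖g' y‖ ^ 2} Lbar)
    (x : EuclideanSpace ℝ (Fin m)) (y : EuclideanSpace ℝ (Fin n))
    (lam : EuclideanSpace ℝ (Fin l))
    (h1 : Matrix.toEuclideanLin Bᵀ lam = g' y)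
    (h2 : ‖lam‖ ^ 2 ≤ (1 / σB) * ‖Matrix.toEuclideanLin Bᵀ lam‖ ^ 2) :
    Lbar + (1 / (2 * Lg) - 1 / (2 * β * σB)) * ‖Matrix.toEuclideanLin Bᵀ lam‖ ^ 2
        + (β / 2) * ‖Matrix.toEuclideanLin A x + Matrix.toEuclideanLin B y - b - β⁻¹ • lam‖ ^ 2 ≤
      f x + g y - (inner ℝ lam (Matrix.toEuclideanLin A x + Matrix.toEuclideanLin B y - b) : ℝ)
        + (β / 2) * ‖Matrix.toEuclideanLin A x + Matrix.toEuclideanLin B y - b‖ ^ 2 := by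
  set r := Matrix.toEuclideanLin A x + Matrix.toEuclideanLin B y - b
  set c := ‖Matrix.toEuclideanLin Bᵀ lam‖ ^ 2
  have hLbar : Lbar ≤ f x + g y - 1 / (2 * Lg) * c := by
    simpa only [c, h1] using hinf.1 ⟨x, y, rfl⟩
  have hdual : ‖lam‖ ^ 2 / (2 * β) ≤ 1 / (2 * β * σB) * c := by
    calc ‖lam‖ ^ 2 / (2 * β) ≤ 1 / σB * c / (2 * β) := by gcongr
      _ = 1 / (2 * β * σB) * c := by field_simp
  have hsquare := neg_inner_add_half_mul_norm_sq_eq hβ.ne' lam r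
  linarith

theorem stmt_13 {l m n : ℕ}
    (f : EuclideanSpace ℝ (Fin m) → ℝ) (g : EuclideanSpace ℝ (Fin n) → ℝ)
    (g' : EuclideanSpace ℝ (Fin n) → EuclideanSpace ℝ (Fin n))
    (hgrad : ∀ y, HasGradientAt g (g' y) y)
    (A : Matrix (Fin l) (Fin m) ℝ) (B : Matrix (Fin l) (Fin n) ℝ) (b : EuclideanSpace ℝ (Fin l))
    (β Lg σB Lbar : ℝ) (hβ : 0 < β) (hLg : 0 < Lg) (hσB : 0 < σB)
    (hcmp : 1 / (2 * β * σB) ≤ 1 / (2 * Lg))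
    (hinf : IsGLB {r : ℝ | ∃ x y, r = f x + g y - (1 / (2 * Lg)) * ‖g' y‖ ^ 2} Lbar)
    (x : EuclideanSpace ℝ (Fin m)) (y : EuclideanSpace ℝ (Fin n))
    (lam : EuclideanSpace ℝ (Fin l))
    (h1 : Matrix.toEuclideanLin Bᵀ lam = g' y)
    (h2 : ‖lam‖ ^ 2 ≤ (1 / σB) * ‖Matrix.toEuclideanLin Bᵀ lam‖ ^ 2) :
    Lbar + (1 / (2 * Lg) - 1 / (2 * β * σB)) * ‖Matrix.toEuclideanLin Bᵀ lam‖ ^ 2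
        + (β / 2) * ‖Matrix.toEuclideanLin A x + Matrix.toEuclideanLin B y - b - β⁻¹ • lam‖ ^ 2 ≤
      f x + g y - (inner ℝ lam (Matrix.toEuclideanLin A x + Matrix.toEuclideanLin B y - b) : ℝ)
        + (β / 2) * ‖Matrix.toEuclideanLin A x + Matrix.toEuclideanLin B y - b‖ ^ 2 :=
  stmt_13_general f g g' A B b β Lg σB Lbar hβ hinf x y lam h1 h2
end
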